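/- The space (ℂ²)^{⊗d} is the internal direct sum of the joint eigenspaces of total spin: (ℂ²)^{⊗d} = ⨁_{k=0}^{⌊d/2⌋} ⨁_{r=0}^{d−2k} V_{l_k, l_k − r}, where l_k = (d − 2k)/2 and V_{l,m} = { v ∈ (ℂ²)^{⊗d} : L² v = l(l+1) v and L₃ v = m v }. -/

import Mathlib

/-- The Pauli matrices `σ₁, σ₂, σ₃`. -/
noncomputable def pauli : Fin 3 → Matrix (Fin 2) (Fin 2) ℂ
  | 0 => !![0, 1; 1, 0]
  | 1 => !![0, -Complex.I; Complex.I, 0]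
  | 2 => !![1, 0; 0, -1]

/-- The spin operator `s_ℓ^{(a)}` on `H = (ℂ²)^{⊗d}` (realized concretely as the space of
functions `(Fin d → Fin 2) → ℂ`, with operators written as matrices): it acts as `(1/2)σ_ℓ`
on the `a`-th tensor factor and as the identity on all other factors. -/
noncomputable def spinOp (d : ℕ) (ℓ : Fin 3) (a : Fin d) :
    Matrix (Fin d → Fin 2) (Fin d → Fin 2) ℂ :=
  Matrix.of fun x y =>
    (1 / 2 : ℂ) * pauli ℓ (x a) (y a) *
      ∏ b ∈ Finset.univ.erase a, (if x b = y b then 1 else 0)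

/-- The Knizhnik–Zamolodchikov coefficient operator `Ω_{ij} = ∑_ℓ s_ℓ^{(i)} ∘ s_ℓ^{(j)}`. -/
noncomputable def omegaOp (d : ℕ) (i j : Fin d) :
    Matrix (Fin d → Fin 2) (Fin d → Fin 2) ℂ :=
  ∑ ℓ : Fin 3, spinOp d ℓ i * spinOp d ℓ j

/-- The total spin operator `L_ℓ = ∑_a s_ℓ^{(a)}`. -/
noncomputable def totalSpin (d : ℕ) (ℓ : Fin 3) :
    Matrix (Fin d → Fin 2) (Fin d → Fin 2) ℂ :=
  ∑ a : Fin d, spinOp d ℓ a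

/-- The total spin Casimir `L² = L₁² + L₂² + L₃²`. -/
noncomputable def totalSpinSq (d : ℕ) :
    Matrix (Fin d → Fin 2) (Fin d → Fin 2) ℂ :=
  ∑ ℓ : Fin 3, totalSpin d ℓ * totalSpin d ℓ

/-- The joint eigenspace `V_{c₁,c₂} = { v : L² v = c₁ v ∧ L₃ v = c₂ v }` of the total-spin
Casimir `L²` and of `L₃` on `(ℂ²)^{⊗d}`. -/
noncomputable def spinEigenspace (d : ℕ) (c₁ c₂ : ℂ) :
    Submodule ℂ ((Fin d → Fin 2) → ℂ) :=
  LinearMap.ker (Matrix.toLin' (totalSpinSq d) - c₁ • LinearMap.id) ⊓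
  LinearMap.ker (Matrix.toLin' (totalSpin d 2) - c₂ • LinearMap.id)

/-!
`L²` and `L₃` are commuting Hermitian operators, so `(ℂ²)^{⊗d}` is the internal direct sum of
all their joint eigenspaces, and it remains to see which pairs of eigenvalues occur. With the
ladder operators `L₊ = L₁ + i L₂`, `L₋ = L₁ - i L₂` one has the `𝔰𝔩₂` relations
`[L₃, L±] = ±L±`, `[L₊, L₋] = 2 L₃`, and `L² = L₋ L₊ + L₃² + L₃ = L₊ L₋ + L₃² - L₃`.
Starting from a joint eigenvector `v` (eigenvalues `c₁`, `c₂`), apply `L₊` as long as the result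
is nonzero, say `j` times, and `L₋` likewise `j'` times; this terminates because `L₃` has only
finitely many eigenvalues. At the top `L²` acts by `l (l + 1)` with `l = c₂ + j`, at the bottom by
`l' (l' - 1)` with `l' = c₂ - j'`, whence `l' = -l` and `2 l = j + j'`. Since `L₃` is diagonal with
eigenvalues `(d - 2n) / 2`, this gives `l = l_k` and `c₂ = l_k - j` with `0 ≤ j ≤ 2 l_k`.
-/

open Module End Function

theorem DirectSum.IsInternal.map_linearEquiv {R M N ι : Type*} [Ring R] [AddCommGroup M]
    [Module R M] [AddCommGroup N] [Module R N] [DecidableEq ι] {A : ι → Submodule R M}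
    (h : DirectSum.IsInternal A) (e : M ≃ₗ[R] N) :
    DirectSum.IsInternal fun i => (A i).map (e : M →ₗ[R] N) := by
  rw [DirectSum.isInternal_submodule_iff_iSupIndep_and_iSup_eq_top] at h ⊢
  refine ⟨(iSupIndep_map_orderIso_iff (Submodule.orderIsoMapComap e)).mpr h.1, ?_⟩
  rw [← Submodule.map_iSup, h.2, Submodule.map_top, LinearEquiv.range]

theorem DirectSum.IsInternal.comp_of_injective {R M ι κ : Type*} [Ring R] [AddCommGroup M]
    [Module R M] [DecidableEq ι] [DecidableEq κ] {A : ι → Submodule R M}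
    (h : DirectSum.IsInternal A) {e : κ → ι} (he : Injective e)
    (hA : ∀ i ∉ Set.range e, A i = ⊥) : DirectSum.IsInternal (A ∘ e) := by
  rw [DirectSum.isInternal_submodule_iff_iSupIndep_and_iSup_eq_top] at h ⊢
  refine ⟨h.1.comp he, eq_top_iff.mpr (h.2 ▸ iSup_le fun i => ?_)⟩
  by_cases hi : i ∈ Set.range e
  · obtain ⟨k, rfl⟩ := hi
    exact le_iSup (A ∘ e) k
  · simp [hA i hi]

theorem Matrix.IsHermitian.isInternal_eigenspace_inf_eigenspace {𝕜 n : Type*} [RCLike 𝕜]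
    [Fintype n] [DecidableEq n] {A B : Matrix n n 𝕜} (hA : A.IsHermitian) (hB : B.IsHermitian)
    (hAB : Commute A B) : DirectSum.IsInternal fun μ : 𝕜 × 𝕜 =>
      eigenspace (Matrix.toLin' A) μ.1 ⊓ eigenspace (Matrix.toLin' B) μ.2 := by
  have h := LinearMap.IsSymmetric.directSum_isInternal_of_commute
    (isSymmetric_toEuclideanLin_iff.mpr hB) (isSymmetric_toEuclideanLin_iff.mpr hA)
    (hAB.symm.map (toLpLinAlgEquiv 2))
  have hmap (C : Matrix n n 𝕜) (μ : 𝕜) : eigenspace (Matrix.toLin' C) μ =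
      (eigenspace (toEuclideanLin C) μ).map (WithLp.linearEquiv 2 𝕜 (n → 𝕜) : _ →ₗ[𝕜] _) := by
    ext v
    simp [Submodule.mem_map_equiv, ← WithLp.toLp_smul, (WithLp.toLp_injective 2).eq_iff]
  simp_rw [hmap, ← Submodule.map_inf _ (LinearEquiv.injective _),
    inf_comm (a := eigenspace (toEuclideanLin A) _)]
  exact h.map_linearEquiv _

section Sl2

variable {R : Type*} [Ring R]

def sl2Casimir (e f h : R) : R := f * e + h * h + h

variable {e f h : R}

theorem sl2Casimir_eq_mul_add_mul_sub (hef : ⁅e, f⁆ = 2 • h) :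
    sl2Casimir e f h = e * f + h * h - h := by
  rw [Ring.lie_def] at hef
  rw [sl2Casimir, sub_eq_iff_eq_add.mp hef]
  abel

theorem commute_sl2Casimir (hhe : ⁅h, e⁆ = e) (hhf : ⁅h, f⁆ = -f) (hef : ⁅e, f⁆ = 2 • h) :
    Commute (sl2Casimir e f h) e ∧ Commute (sl2Casimir e f h) f ∧
      Commute (sl2Casimir e f h) h := by
  simp only [Ring.lie_def, sub_eq_iff_eq_add'] at hhe hhf hef
  have hhe' (x : R) : h * (e * x) = e * (h * x) + e * x := by
    rw [← mul_assoc, hhe, add_mul, mul_assoc]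
  have hhf' (x : R) : h * (f * x) = f * (h * x) + -f * x := by
    rw [← mul_assoc, hhf, add_mul, mul_assoc]
  have hef' (x : R) : e * (f * x) = f * (e * x) + 2 • h * x := by
    rw [← mul_assoc, hef, add_mul, mul_assoc]
  refine ⟨?_, ?_, ?_⟩ <;>
  · simp only [commute_iff_eq, sl2Casimir, mul_add, add_mul, mul_assoc, hhe, hhf, hef, hhe', hhf',
      hef', neg_mul, mul_neg, smul_mul_assoc, mul_smul_comm, smul_add]
    abel

variable {K V : Type*} [Field K] [AddCommGroup V] [Module K V]

theorem pow_apply_mem_eigenspace_of_lie_eq_smul {f g : End K V} {t c : K}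
    (hfg : ⁅f, g⁆ = t • g) {v : V} (hv : v ∈ f.eigenspace c) (j : ℕ) :
    (g ^ j) v ∈ f.eigenspace (c + j * t) := by
  induction j with
  | zero => simpa using hv
  | succ j ih =>
    rw [mem_eigenspace_iff] at ih ⊢
    have hfg' : f * g = g * f + t • g := by rw [← hfg, Ring.lie_def]; abel
    rw [pow_succ', mul_apply, ← mul_apply f, hfg', LinearMap.add_apply, mul_apply, ih,
      map_smul, LinearMap.smul_apply, ← add_smul]
    push_cast
    ring_nf

theorem exists_pow_apply_ne_zero_and_apply_eq_zero [FiniteDimensional K V] [CharZero K]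
    {f g : End K V} {t c : K} (hfg : ⁅f, g⁆ = t • g) (ht : t ≠ 0) {v : V}
    (hv : v ∈ f.eigenspace c) (hv0 : v ≠ 0) : ∃ j : ℕ, (g ^ j) v ≠ 0 ∧ g ((g ^ j) v) = 0 := by
  classical
  have hterm : ∃ j, (g ^ j) v = 0 := by
    by_contra! h
    refine Set.infinite_of_injective_forall_mem (f := fun j : ℕ => c + j * t)
      (fun i j hij => ?_) (fun j => hasEigenvalue_of_hasEigenvector
        ⟨pow_apply_mem_eigenspace_of_lie_eq_smul hfg hv j, h j⟩) f.finite_hasEigenvalue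
    simpa [ht] using hij
  have hpos : Nat.find hterm ≠ 0 := fun h0 => hv0 (by simpa [h0] using Nat.find_spec hterm)
  refine ⟨Nat.find hterm - 1, Nat.find_min hterm (by omega), ?_⟩
  rw [← mul_apply, ← pow_succ', Nat.sub_add_cancel (Nat.pos_of_ne_zero hpos)]
  exact Nat.find_spec hterm

variable {E F H : End K V} {m : K} {w : V}

theorem sl2Casimir_apply_of_raise_eq_zero (hw : E w = 0) (hHw : w ∈ H.eigenspace m) :
    sl2Casimir E F H w = (m * (m + 1)) • w := by
  rw [mem_eigenspace_iff] at hHw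
  simp only [sl2Casimir, LinearMap.add_apply, mul_apply, hw, hHw, map_zero, map_smul, smul_smul]
  module

theorem sl2Casimir_apply_of_lower_eq_zero (hEF : ⁅E, F⁆ = 2 • H) (hw : F w = 0)
    (hHw : w ∈ H.eigenspace m) : sl2Casimir E F H w = (m * (m - 1)) • w := by
  rw [mem_eigenspace_iff] at hHw
  simp only [sl2Casimir_eq_mul_add_mul_sub hEF, LinearMap.sub_apply, LinearMap.add_apply,
    mul_apply, hw, hHw, map_zero, map_smul, smul_smul]
  module

theorem exists_highest_weight [FiniteDimensional K V] [CharZero K]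
    (hHE : ⁅H, E⁆ = E) (hHF : ⁅H, F⁆ = -F) (hEF : ⁅E, F⁆ = 2 • H) {c₁ c₂ : K} {v : V}
    (hv0 : v ≠ 0) (hv₁ : v ∈ (sl2Casimir E F H).eigenspace c₁) (hv₂ : v ∈ H.eigenspace c₂) :
    ∃ (l : K) (j j' : ℕ), H.HasEigenvalue l ∧ 2 * l = j + j' ∧ c₁ = l * (l + 1) ∧
      c₂ = l - j := by
  obtain ⟨hCE, hCF, -⟩ := commute_sl2Casimir hHE hHF hEF
  have hCE' : ⁅sl2Casimir E F H, E⁆ = (0 : K) • E := by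
    rw [zero_smul, Ring.lie_def, hCE.eq, sub_self]
  have hCF' : ⁅sl2Casimir E F H, F⁆ = (0 : K) • F := by
    rw [zero_smul, Ring.lie_def, hCF.eq, sub_self]
  have hHE' : ⁅H, E⁆ = (1 : K) • E := by rw [one_smul, hHE]
  have hHF' : ⁅H, F⁆ = (-1 : K) • F := by rw [neg_one_smul, hHF]
  obtain ⟨j, hw0, hEw⟩ := exists_pow_apply_ne_zero_and_apply_eq_zero hHE' one_ne_zero hv₂ hv0
  obtain ⟨j', hw0', hFw'⟩ :=
    exists_pow_apply_ne_zero_and_apply_eq_zero hHF' (by norm_num) hv₂ hv0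
  have hHw : (E ^ j) v ∈ H.eigenspace (c₂ + j) := by
    simpa using pow_apply_mem_eigenspace_of_lie_eq_smul hHE' hv₂ j
  have hHw' : (F ^ j') v ∈ H.eigenspace (c₂ - j') := by
    simpa [sub_eq_add_neg] using pow_apply_mem_eigenspace_of_lie_eq_smul hHF' hv₂ j'
  have htop : c₁ = (c₂ + j) * (c₂ + j + 1) := smul_left_injective K hw0 <|
    (mem_eigenspace_iff.mp (by simpa using pow_apply_mem_eigenspace_of_lie_eq_smul hCE' hv₁ j)
      ).symm.trans (sl2Casimir_apply_of_raise_eq_zero hEw hHw)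
  have hbot : c₁ = (c₂ - j') * (c₂ - j' - 1) := smul_left_injective K hw0' <|
    (mem_eigenspace_iff.mp (by simpa using pow_apply_mem_eigenspace_of_lie_eq_smul hCF' hv₁ j')
      ).symm.trans (sl2Casimir_apply_of_lower_eq_zero hEF hFw' hHw')
  have hsum : (c₂ + j) + (c₂ - j') = 0 := by
    have hfac : ((c₂ + j) + (c₂ - j')) * (((j + j' : ℕ) : K) + 1) = 0 := by
      push_cast
      linear_combination hbot - htop
    exact (mul_eq_zero.mp hfac).resolve_right (Nat.cast_add_one_ne_zero _)
  exact ⟨c₂ + j, j, j', hasEigenvalue_of_hasEigenvector ⟨hHw, hw0⟩,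
    by linear_combination hsum, htop, by ring⟩

end Sl2

section SiteOperator

variable {ι σ R : Type*} [DecidableEq ι] [Fintype σ] [DecidableEq σ] [CommRing R]

/-- `M` acting on the `a`-th tensor factor of `(R^σ)^{⊗ι} ≅ (ι → σ) → R`. -/
def siteOp (a : ι) : Matrix σ σ R →ₐ[R] End R ((ι → σ) → R) :=
  AlgHom.ofLinearMap
    (LinearMap.mk₂ R (fun M v x => ∑ t, M (x a) t * v (update x a t))
      (fun M N v => by ext x; simp [add_mul, Finset.sum_add_distrib])
      (fun c M v => by ext x; simp [Finset.mul_sum, mul_assoc])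
      (fun M v w => by ext x; simp [mul_add, Finset.sum_add_distrib])
      (fun c M v => by ext x; simp [Finset.mul_sum, mul_left_comm]))
    (by ext v x; simp [Matrix.one_apply])
    (fun M N => by
      ext v x
      simp only [LinearMap.mk₂_apply, mul_apply, update_self, update_idem, Matrix.mul_apply,
        Finset.sum_mul, Finset.mul_sum, mul_assoc]
      exact Finset.sum_comm)

theorem siteOp_apply (a : ι) (M : Matrix σ σ R) (v : (ι → σ) → R) (x : ι → σ) :
    siteOp a M v x = ∑ t, M (x a) t * v (update x a t) := rfl

theorem siteOp_commute {a b : ι} (hab : a ≠ b) (M N : Matrix σ σ R) :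
    Commute (siteOp a M) (siteOp b N) := by
  ext v x
  simp only [mul_apply, siteOp_apply, update_of_ne hab, update_of_ne hab.symm, Finset.mul_sum,
    update_comm hab]
  rw [Finset.sum_comm]
  simp only [mul_left_comm]

variable [Fintype ι]

theorem siteOp_eq_toLin' (a : ι) (M : Matrix σ σ R) :
    siteOp a M = Matrix.toLin' (Matrix.of fun x y =>
      M (x a) (y a) * ∏ b ∈ Finset.univ.erase a, if x b = y b then 1 else 0) := by
  refine LinearMap.ext fun v => funext fun x => ?_
  have hprod (y : ι → σ) : (∏ b ∈ Finset.univ.erase a, if x b = y b then (1 : R) else 0) =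
      if y ∈ Finset.univ.image (update x a) then 1 else 0 := by
    simp [Finset.prod_boole, update_eq_iff]
  rw [Matrix.toLin'_apply, Matrix.mulVec, dotProduct]
  simp_rw [Matrix.of_apply]
  simp only [hprod, mul_ite, mul_one, mul_zero, ite_mul, zero_mul, Finset.sum_ite_mem,
    Finset.univ_inter]
  rw [Finset.sum_image fun s _ t _ hst => update_injective x a hst, siteOp_apply]
  simp

variable (ι) in
def totalOp : Matrix σ σ R →ₗ[R] End R ((ι → σ) → R) := ∑ a, (siteOp a).toLinearMap

theorem totalOp_apply (M : Matrix σ σ R) : totalOp ι M = ∑ a : ι, siteOp a M := by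
  simp [totalOp]

theorem lie_totalOp (M N : Matrix σ σ R) : ⁅totalOp ι M, totalOp ι N⁆ = totalOp ι ⁅M, N⁆ := by
  rw [totalOp_apply, totalOp_apply, totalOp_apply, Ring.lie_def, Finset.sum_mul_sum,
    Finset.sum_mul_sum, Finset.sum_comm (f := fun a b => siteOp a N * siteOp b M),
    ← Finset.sum_sub_distrib]
  refine Finset.sum_congr rfl fun a _ => ?_
  rw [← Finset.sum_sub_distrib, Finset.sum_eq_single a
    (fun b _ hba => sub_eq_zero.mpr (siteOp_commute hba.symm M N).eq) (by simp), Ring.lie_def,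
    map_sub, map_mul, map_mul]

theorem totalOp_diagonal_apply (w : σ → R) (v : (ι → σ) → R) (x : ι → σ) :
    totalOp ι (Matrix.diagonal w) v x = (∑ a, w (x a)) * v x := by
  simp [totalOp_apply, siteOp_apply, Matrix.diagonal_apply, Finset.sum_mul]

theorem exists_eq_sum_of_hasEigenvalue_totalOp_diagonal {K : Type*} [Field K] {w : σ → K}
    {μ : K} (h : (totalOp ι (Matrix.diagonal w)).HasEigenvalue μ) :
    ∃ x : ι → σ, μ = ∑ a, w (x a) := by
  obtain ⟨v, hv, hv0⟩ := h.exists_hasEigenvector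
  obtain ⟨x, hx⟩ := ne_iff.mp hv0
  refine ⟨x, mul_right_cancel₀ hx ?_⟩
  rw [← totalOp_diagonal_apply, mem_eigenspace_iff.mp hv]
  rfl

end SiteOperator

section Spin

def spinRaise : Matrix (Fin 2) (Fin 2) ℂ := !![0, 1; 0, 0]

def spinLower : Matrix (Fin 2) (Fin 2) ℂ := !![0, 0; 1, 0]

theorem pauli_zero_eq : pauli 0 = spinRaise + spinLower := by
  ext i j; fin_cases i <;> fin_cases j <;> simp [pauli, spinRaise, spinLower]

theorem pauli_one_eq : pauli 1 = Complex.I • (spinLower - spinRaise) := by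
  ext i j; fin_cases i <;> fin_cases j <;> simp [pauli, spinRaise, spinLower]

theorem half_pauli_two_eq : (1 / 2 : ℂ) • pauli 2 = Matrix.diagonal ![1 / 2, -1 / 2] := by
  ext i j; fin_cases i <;> fin_cases j <;> norm_num [pauli]

theorem lie_half_pauli_two_spinRaise : ⁅(1 / 2 : ℂ) • pauli 2, spinRaise⁆ = spinRaise := by
  ext i j; fin_cases i <;> fin_cases j <;> norm_num [Ring.lie_def, pauli, spinRaise]

theorem lie_half_pauli_two_spinLower : ⁅(1 / 2 : ℂ) • pauli 2, spinLower⁆ = -spinLower := by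
  ext i j; fin_cases i <;> fin_cases j <;> norm_num [Ring.lie_def, pauli, spinLower]

theorem lie_spinRaise_spinLower : ⁅spinRaise, spinLower⁆ = 2 • ((1 / 2 : ℂ) • pauli 2) := by
  ext i j; fin_cases i <;> fin_cases j <;> simp [Ring.lie_def, pauli, spinRaise, spinLower]

theorem pauli_isHermitian (ℓ : Fin 3) : (pauli ℓ).IsHermitian := by
  fin_cases ℓ <;> ext i j <;> fin_cases i <;> fin_cases j <;> simp [pauli]

variable (d : ℕ)

theorem spinOp_isHermitian (ℓ : Fin 3) (a : Fin d) : (spinOp d ℓ a).IsHermitian := by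
  ext x y
  rw [Matrix.conjTranspose_apply, spinOp, Matrix.of_apply, Matrix.of_apply]
  simp only [star_mul', star_prod, (pauli_isHermitian ℓ).apply, apply_ite star, star_one,
    star_zero, @eq_comm _ (y _)]
  norm_num

theorem totalSpin_isHermitian (ℓ : Fin 3) : (totalSpin d ℓ).IsHermitian :=
  isSelfAdjoint_sum _ fun a _ => spinOp_isHermitian d ℓ a

theorem totalSpinSq_isHermitian : (totalSpinSq d).IsHermitian :=
  isSelfAdjoint_sum _ fun ℓ _ => by
    simpa only [(totalSpin_isHermitian d ℓ).star_eq] using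
      IsSelfAdjoint.star_mul_self (totalSpin d ℓ)

theorem toLin'_totalSpin (ℓ : Fin 3) :
    Matrix.toLin' (totalSpin d ℓ) = totalOp (Fin d) ((1 / 2 : ℂ) • pauli ℓ) := by
  rw [totalSpin, map_sum, totalOp_apply]
  refine Finset.sum_congr rfl fun a _ => ?_
  rw [siteOp_eq_toLin']
  congr 1

theorem lie_totalSpin_two_raise :
    ⁅Matrix.toLin' (totalSpin d 2), totalOp (Fin d) spinRaise⁆ = totalOp (Fin d) spinRaise := by
  rw [toLin'_totalSpin, lie_totalOp, lie_half_pauli_two_spinRaise]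

theorem lie_totalSpin_two_lower :
    ⁅Matrix.toLin' (totalSpin d 2), totalOp (Fin d) spinLower⁆ = -totalOp (Fin d) spinLower := by
  rw [toLin'_totalSpin, lie_totalOp, lie_half_pauli_two_spinLower, map_neg]

theorem lie_raise_lower : ⁅totalOp (Fin d) spinRaise, totalOp (Fin d) spinLower⁆ =
    2 • Matrix.toLin' (totalSpin d 2) := by
  rw [lie_totalOp, lie_spinRaise_spinLower, map_nsmul, toLin'_totalSpin]

theorem toLin'_totalSpinSq : Matrix.toLin' (totalSpinSq d) =
    sl2Casimir (totalOp (Fin d) spinRaise) (totalOp (Fin d) spinLower)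
      (Matrix.toLin' (totalSpin d 2)) := by
  have hEF := lie_raise_lower d
  rw [Ring.lie_def, sub_eq_iff_eq_add'] at hEF
  have hsq (ℓ : Fin 3) : Matrix.toLin' (totalSpin d ℓ * totalSpin d ℓ) =
      Matrix.toLin' (totalSpin d ℓ) * Matrix.toLin' (totalSpin d ℓ) := Matrix.toLin'_mul _ _
  rw [totalSpinSq, map_sum, Fin.sum_univ_three, hsq, hsq, hsq, toLin'_totalSpin d 0,
    toLin'_totalSpin d 1, pauli_zero_eq, pauli_one_eq, smul_smul, map_smul, map_smul, map_add,
    map_sub, sl2Casimir]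
  simp only [smul_mul_smul_comm, mul_add, add_mul, mul_sub, sub_mul, hEF]
  match_scalars <;> ring_nf <;> norm_num [Complex.I_sq]

theorem commute_totalSpinSq_totalSpin_two : Commute (totalSpinSq d) (totalSpin d 2) := by
  rw [← commute_map_iff (f := Matrix.toLinAlgEquiv') Matrix.toLinAlgEquiv'.injective]
  change Commute (Matrix.toLin' (totalSpinSq d)) (Matrix.toLin' (totalSpin d 2))
  rw [toLin'_totalSpinSq]
  exact (commute_sl2Casimir (lie_totalSpin_two_raise d) (lie_totalSpin_two_lower d)
    (lie_raise_lower d)).2.2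

open Finset in
theorem exists_eq_of_hasEigenvalue_totalSpin_two {μ : ℂ}
    (h : HasEigenvalue (Matrix.toLin' (totalSpin d 2)) μ) :
    ∃ n ≤ d, μ = ((d : ℂ) - 2 * n) / 2 := by
  rw [toLin'_totalSpin, half_pauli_two_eq] at h
  obtain ⟨x, rfl⟩ := exists_eq_sum_of_hasEigenvalue_totalOp_diagonal h
  refine ⟨#{a | x a = 1}, (card_filter_le _ _).trans (by simp), ?_⟩
  have hw (t : Fin 2) : ![(1 / 2 : ℂ), -1 / 2] t = 1 / 2 - if t = 1 then 1 else 0 := by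
    fin_cases t <;> norm_num
  simp only [hw, sum_sub_distrib, sum_boole, sum_const, card_univ, Fintype.card_fin, nsmul_eq_mul]
  ring

theorem spinEigenspace_eq (c₁ c₂ : ℂ) : spinEigenspace d c₁ c₂ =
    eigenspace (Matrix.toLin' (totalSpinSq d)) c₁ ⊓
      eigenspace (Matrix.toLin' (totalSpin d 2)) c₂ := by
  rw [spinEigenspace, eigenspace_def, eigenspace_def, one_eq_id]

theorem isInternal_spinEigenspace :
    DirectSum.IsInternal fun c : ℂ × ℂ => spinEigenspace d c.1 c.2 := by
  simp_rw [spinEigenspace_eq]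
  exact (totalSpinSq_isHermitian d).isInternal_eigenspace_inf_eigenspace
    (totalSpin_isHermitian d 2) (commute_totalSpinSq_totalSpin_two d)

theorem exists_of_spinEigenspace_ne_bot {c₁ c₂ : ℂ} (h : spinEigenspace d c₁ c₂ ≠ ⊥) :
    ∃ k r : ℕ, 2 * k ≤ d ∧ r ≤ d - 2 * k ∧
      c₁ = (((d : ℂ) - 2 * k) / 2) * ((((d : ℂ) - 2 * k) / 2) + 1) ∧
      c₂ = ((d : ℂ) - 2 * k) / 2 - r := by
  obtain ⟨v, hv, hv0⟩ := Submodule.ne_bot_iff _ |>.mp h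
  rw [spinEigenspace_eq, Submodule.mem_inf, toLin'_totalSpinSq] at hv
  obtain ⟨l, j, j', hl, hjj', rfl, rfl⟩ := exists_highest_weight (lie_totalSpin_two_raise d)
    (lie_totalSpin_two_lower d) (lie_raise_lower d) hv0 hv.1 hv.2
  obtain ⟨k, -, rfl⟩ := exists_eq_of_hasEigenvalue_totalSpin_two d hl
  have hd : d = 2 * k + j + j' := by
    have : ((d : ℕ) : ℂ) = ((2 * k + j + j' : ℕ) : ℂ) := by
      push_cast
      linear_combination hjj'
    exact_mod_cast this
  exact ⟨k, j, by omega, by omega, rfl, rfl⟩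

variable {d} in
theorem eq_of_spin_casimir_eq {k k' : ℕ} (hk : 2 * k ≤ d) (hk' : 2 * k' ≤ d)
    (h : ((d : ℂ) - 2 * k) / 2 * (((d : ℂ) - 2 * k) / 2 + 1) =
      ((d : ℂ) - 2 * k') / 2 * (((d : ℂ) - 2 * k') / 2 + 1)) : k = k' := by
  have hnat : (d - 2 * k) * (d - 2 * k + 2) = (d - 2 * k') * (d - 2 * k' + 2) := by
    have : (((d - 2 * k) * (d - 2 * k + 2) : ℕ) : ℂ) = ((d - 2 * k') * (d - 2 * k' + 2) : ℕ) := by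
      push_cast [Nat.cast_sub hk, Nat.cast_sub hk']
      linear_combination 4 * h
    exact_mod_cast this
  have : d - 2 * k = d - 2 * k' := le_antisymm (by nlinarith) (by nlinarith)
  omega

end Spin

theorem spin_direct_sum_general (d : ℕ) :
    DirectSum.IsInternal
      (fun p : Σ k : Fin (d / 2 + 1), Fin (d - 2 * (k : ℕ) + 1) =>
        spinEigenspace d
          ((((d : ℂ) - 2 * (p.1 : ℕ)) / 2) * ((((d : ℂ) - 2 * (p.1 : ℕ)) / 2) + 1))
          ((((d : ℂ) - 2 * (p.1 : ℕ)) / 2) - (p.2 : ℕ))) := by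
  refine (isInternal_spinEigenspace d).comp_of_injective (e := fun p => (_, _)) ?_ ?_
  · rintro ⟨⟨k, hk⟩, ⟨r, hr⟩⟩ ⟨⟨k', hk'⟩, ⟨r', hr'⟩⟩ h
    obtain ⟨hc₁, hc₂⟩ := Prod.mk.inj h
    obtain rfl : k = k' := eq_of_spin_casimir_eq (by omega) (by omega) hc₁
    obtain rfl : r = r' := by exact_mod_cast (sub_right_injective hc₂ : (r : ℂ) = r')
    rfl
  · rintro ⟨c₁, c₂⟩ hc
    by_contra hne
    obtain ⟨k, r, hk, hr, rfl, rfl⟩ := exists_of_spinEigenspace_ne_bot d hne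
    exact hc ⟨⟨⟨k, by omega⟩, ⟨r, Nat.lt_succ_of_le hr⟩⟩, rfl⟩

/-- **Total-spin decomposition of `(ℂ²)^{⊗d}`**: the space is the internal direct sum of
the joint eigenspaces `V_{l_k, l_k − r}` for `0 ≤ k ≤ ⌊d/2⌋` and `0 ≤ r ≤ d − 2k`, where
`l_k = (d − 2k)/2` and `V_{l,m}` is the joint eigenspace of `L²` (eigenvalue `l(l+1)`) and
`L₃` (eigenvalue `m`). -/
theorem spin_direct_sum (d : ℕ) (hd : 1 ≤ d) :
    DirectSum.IsInternal
      (fun p : Σ k : Fin (d / 2 + 1), Fin (d - 2 * (k : ℕ) + 1) =>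
        spinEigenspace d
          ((((d : ℂ) - 2 * (p.1 : ℕ)) / 2) * ((((d : ℂ) - 2 * (p.1 : ℕ)) / 2) + 1))
          ((((d : ℂ) - 2 * (p.1 : ℕ)) / 2) - (p.2 : ℕ))) :=
  spin_direct_sum_general d
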